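/- Define the Lobachevsky function Λ(x) = −∫_0^x log|2·sin(t)| dt for real x. Then for every real θ, Λ(2θ) = 2·Λ(θ) + 2·Λ(θ + π/2). -/

import Mathlib

/-!
Pointwise, `2 sin 2t = (2 sin t)(2 cos t)` and `cos t = sin (t + π/2)`, so outside the discrete
zero set of `sin 2t` the integrand satisfies
`log |2 sin 2t| = log |2 sin t| + log |2 sin (t + π/2)|`. Substituting `t ↦ 2t` in `Λ(2θ)` gives
`Λ(2θ) = 2Λ(θ) + 2(Λ(θ + π/2) - Λ(π/2))`, and it remains to see `Λ(π/2) = 0`: at `θ = π/2`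
this identity, combined with the symmetry `sin (π - t) = sin t`, reads `Λ(π/2) = 2Λ(π/2)`.
-/

open Real MeasureTheory intervalIntegral

/-- The Lobachevsky function in Milnor's normalization,
`Λ(x) = −∫_0^x log|2 sin t| dt`. -/
noncomputable def lobachevsky (x : ℝ) : ℝ := -∫ t in (0:ℝ)..x, Real.log |2 * Real.sin t|

open Filter Set

theorem intervalIntegrable_log_abs_two_mul_sin (a b : ℝ) :
    IntervalIntegrable (fun t => log |2 * sin t|) volume a b :=
  (analyticOnNhd_const.mul analyticOnNhd_sin).meromorphicOn.intervalIntegrable_log_norm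

theorem log_abs_two_mul_sin_two_mul_eventuallyEq :
    (fun t => log |2 * sin (2 * t)|) =ᶠ[codiscrete ℝ]
      fun t => log |2 * sin t| + log |2 * sin (t + π / 2)| := by
  filter_upwards [analyticOnNhd_sin.preimage_zero_mem_codiscrete (x := π / 2) (by simp),
    analyticOnNhd_cos.preimage_zero_mem_codiscrete (x := 0) (by simp)] with t hsin hcos
  rw [sin_add_pi_div_two, sin_two_mul, ← log_mul (by simpa using hsin) (by simpa using hcos),
    ← abs_mul]
  ring_nf

theorem integral_log_abs_two_mul_sin_two_mul (θ : ℝ) :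
    ∫ t in 0..2 * θ, log |2 * sin t| =
      2 * ((∫ t in 0..θ, log |2 * sin t|) + ∫ t in π / 2..θ + π / 2, log |2 * sin t|) := by
  have hshift : IntervalIntegrable (fun t => log |2 * sin (t + π / 2)|) volume 0 θ := by
    simpa using
      (intervalIntegrable_log_abs_two_mul_sin (π / 2) (θ + π / 2)).comp_add_right (π / 2)
  calc ∫ t in 0..2 * θ, log |2 * sin t|
      = 2 * ∫ t in 0..θ, log |2 * sin (2 * t)| := by
        simpa using
          (smul_integral_comp_mul_left (fun t => log |2 * sin t|) 2 (a := 0) (b := θ)).symm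
    _ = 2 * ∫ t in 0..θ, (log |2 * sin t| + log |2 * sin (t + π / 2)|) := by
        rw [integral_congr_codiscreteWithin
          (codiscreteWithin_mono (subset_univ _) log_abs_two_mul_sin_two_mul_eventuallyEq)]
    _ = 2 * ((∫ t in 0..θ, log |2 * sin t|) + ∫ t in π / 2..θ + π / 2, log |2 * sin t|) := by
        rw [integral_add (intervalIntegrable_log_abs_two_mul_sin 0 θ) hshift,
          integral_comp_add_right (fun t => log |2 * sin t|), zero_add]

theorem integral_log_abs_two_mul_sin_pi_div_two_pi :
    ∫ t in π / 2..π, log |2 * sin t| = ∫ t in 0..π / 2, log |2 * sin t| := by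
  simpa [sin_pi_sub, sub_half] using
    (integral_comp_sub_left (fun t => log |2 * sin t|) π (a := 0) (b := π / 2)).symm

theorem integral_log_abs_two_mul_sin_zero_pi_div_two :
    ∫ t in 0..π / 2, log |2 * sin t| = 0 := by
  have hdup := integral_log_abs_two_mul_sin_two_mul (π / 2)
  rw [mul_div_cancel₀ π two_ne_zero, add_halves, integral_log_abs_two_mul_sin_pi_div_two_pi,
    ← integral_add_adjacent_intervals (intervalIntegrable_log_abs_two_mul_sin 0 (π / 2))
      (intervalIntegrable_log_abs_two_mul_sin (π / 2) π),
    integral_log_abs_two_mul_sin_pi_div_two_pi] at hdup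
  linarith

/-- The duplication identity for the Lobachevsky function:
`Λ(2θ) = 2Λ(θ) + 2Λ(θ + π/2)`. -/
theorem lobachevsky_two_mul (θ : ℝ) :
    lobachevsky (2 * θ) = 2 * lobachevsky θ + 2 * lobachevsky (θ + π / 2) := by
  have hsplit := integral_add_adjacent_intervals (intervalIntegrable_log_abs_two_mul_sin 0 (π / 2))
    (intervalIntegrable_log_abs_two_mul_sin (π / 2) (θ + π / 2))
  rw [integral_log_abs_two_mul_sin_zero_pi_div_two, zero_add] at hsplit
  simp only [lobachevsky, integral_log_abs_two_mul_sin_two_mul, hsplit]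
  ring
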